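/- Let Q be a local, regular Dirichlet form on a locally compact, separable, locally connected metric space X with Radon measure m of full support. Then for every open set A ⊆ X and every topological connected component B of A, the restriction (Q^A)_B of the part Q^A to functions vanishing a.e. outside B equals the part Q^B, i.e., D((Q^A)_B) = D(Q^B) = the form-norm closure of C_c(B) ∩ D(Q). -/

import Mathlib

open MeasureTheory Filter Topology RealInnerProductSpace

noncomputable section

variable {X : Type*} [MeasurableSpace X]

open scoped Classical in
/-- Multiplication by the indicator function of a set `A`, as a map on `L²`. -/
def indMul {μ : Measure X} (A : Set X) (f : Lp ℝ 2 μ) : Lp ℝ 2 μ :=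
  if h : MeasurableSet A then ((Lp.memLp f).indicator h).toLp else 0

/-- A closed (nonnegative, symmetric) quadratic form in the wide sense on `L²(X,m)`:
its domain is a not necessarily dense subspace which is complete in the form norm. -/
structure WideForm (μ : Measure X) where
  dom : Submodule ℝ (Lp ℝ 2 μ)
  Q : Lp ℝ 2 μ → Lp ℝ 2 μ → ℝ
  symm : ∀ u v, Q u v = Q v u
  add_left : ∀ u v w, Q (u + v) w = Q u w + Q v w
  smul_left : ∀ (c : ℝ) u v, Q (c • u) v = c * Q u v
  nonneg : ∀ u, 0 ≤ Q u u
  closed : ∀ f : ℕ → Lp ℝ 2 μ, (∀ n, f n ∈ dom) →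
    (∀ ε > 0, ∃ N, ∀ m ≥ N, ∀ n ≥ N,
      Q (f m - f n) (f m - f n) + ‖f m - f n‖ ^ 2 < ε) →
    ∃ g ∈ dom, Tendsto (fun n => Q (f n - g) (f n - g) + ‖f n - g‖ ^ 2) atTop (nhds 0)

/-- `G` is the resolvent family of the closed form `T`. -/
def WideForm.IsResolvent {μ : Measure X} (T : WideForm μ)
    (G : ℝ → Lp ℝ 2 μ →L[ℝ] Lp ℝ 2 μ) : Prop :=
  ∀ α > 0, ∀ u, G α u ∈ T.dom ∧
    ∀ v ∈ T.dom, T.Q (G α u) v + α * ⟪G α u, v⟫ = ⟪u, v⟫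

/-- `T` is positivity preserving. -/
def WideForm.PosPres {μ : Measure X} (T : WideForm μ) : Prop :=
  ∀ u ∈ T.dom, |u| ∈ T.dom ∧ T.Q |u| |u| ≤ T.Q u u

/-- The domain of the part `Q^A` of `Q` on an open set `A`: form-norm closure of
`C_c(A) ∩ D(Q)`. -/
def PartDom {Y : Type*} [MeasurableSpace Y] [TopologicalSpace Y] {μ : Measure Y}
    (T : WideForm μ) (A : Set Y) : Set (Lp ℝ 2 μ) :=
  {u | u ∈ T.dom ∧ ∃ g : ℕ → Lp ℝ 2 μ,
    (∀ m, g m ∈ T.dom ∧ ∃ φ : Y → ℝ, Continuous φ ∧ HasCompactSupport φ ∧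
      tsupport φ ⊆ A ∧ (g m : Y → ℝ) =ᵐ[μ] φ) ∧
    Tendsto (fun m => T.Q (g m - u) (g m - u) + ‖g m - u‖ ^ 2) atTop (nhds 0)}

/-!
Write `B = connectedComponentIn A x₀`. In a locally connected space both `B` and `A \ B` are open,
so for `φ ∈ C_c(A)` the function `1_B φ` lies in `C_c(B)`. It is again represented by a domain
element: it is `φ` clipped between `-Mχ` and `Mχ`, where `M ≥ |φ|` and `χ ≥ 0` is a domain
function equal to `1` on the compact set `B ∩ supp φ` and to `0` off `B`; such a `χ` is obtained by
truncating a uniform approximation of a Urysohn function. If `g m → u` in the form norm with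
`g m ∈ C_c(A)` and `u` vanishes off `B`, then `g m - u = (1_B g m - u) + 1_{A \ B} g m` is a sum of
disjointly supported domain elements, so by locality `1_B g m - u` has form norm at most that of
`g m - u`, and `1_B g m → u`.
-/

section Topology

variable {Y M : Type*} [TopologicalSpace Y] [Zero M] {A B : Set Y} {φ : Y → M}

theorem isOpen_diff_connectedComponentIn [LocallyConnectedSpace Y] (hA : IsOpen A) (x : Y) :
    IsOpen (A \ connectedComponentIn A x) := by
  rw [isOpen_iff_forall_mem_open]
  rintro y ⟨hyA, hyB⟩
  refine ⟨connectedComponentIn A y, fun z hz => ⟨connectedComponentIn_subset _ _ hz, ?_⟩,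
    hA.connectedComponentIn, mem_connectedComponentIn hyA⟩
  rintro hzB
  rw [connectedComponentIn_eq hzB, ← connectedComponentIn_eq hz] at hyB
  exact hyB (mem_connectedComponentIn hyA)

theorem isClosed_inter_tsupport (hAB : IsOpen (A \ B)) (hφA : tsupport φ ⊆ A) :
    IsClosed (B ∩ tsupport φ) := by
  have h : B ∩ tsupport φ = tsupport φ \ (A \ B) := by
    ext x
    constructor
    · rintro ⟨hxB, hx⟩
      exact ⟨hx, fun h => h.2 hxB⟩
    · rintro ⟨hx, hxAB⟩
      exact ⟨by_contra fun hxB => hxAB ⟨hφA hx, hxB⟩, hx⟩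
  rw [h]
  exact (isClosed_tsupport φ).sdiff hAB

theorem tsupport_indicator_subset_inter (hAB : IsOpen (A \ B)) (hφA : tsupport φ ⊆ A) :
    tsupport (B.indicator φ) ⊆ B ∩ tsupport φ :=
  closure_minimal (Set.support_indicator.trans_subset
    (Set.inter_subset_inter_right B (subset_tsupport φ))) (isClosed_inter_tsupport hAB hφA)

theorem HasCompactSupport.isCompact_inter_tsupport (hφ : HasCompactSupport φ)
    (hAB : IsOpen (A \ B)) (hφA : tsupport φ ⊆ A) : IsCompact (B ∩ tsupport φ) :=
  hφ.of_isClosed_subset (isClosed_inter_tsupport hAB hφA) Set.inter_subset_right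

theorem HasCompactSupport.indicator_of_isOpen_diff (hφ : HasCompactSupport φ)
    (hAB : IsOpen (A \ B)) (hφA : tsupport φ ⊆ A) : HasCompactSupport (B.indicator φ) :=
  (hφ.isCompact_inter_tsupport hAB hφA).of_isClosed_subset (isClosed_tsupport _)
    (tsupport_indicator_subset_inter hAB hφA)

theorem Continuous.indicator_of_isOpen_diff [TopologicalSpace M] (hφ : Continuous φ)
    (hB : IsOpen B) (hAB : IsOpen (A \ B)) (hφA : tsupport φ ⊆ A) :
    Continuous (B.indicator φ) := by
  refine hφ.indicator fun x hx => image_eq_zero_of_notMem_tsupport fun hxφ => ?_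
  have hxB : x ∉ B := fun h => (hB.frontier_eq ▸ hx).2 h
  obtain ⟨y, hyAB, hyB⟩ := mem_closure_iff.1 (frontier_subset_closure hx) (A \ B) hAB
    ⟨hφA hxφ, hxB⟩
  exact hyAB.2 hyB

end Topology

namespace WideForm

variable {μ : Measure X} (T : WideForm μ)

def IsLocal : Prop :=
  ∀ u ∈ T.dom, ∀ v ∈ T.dom, ((fun x => (u : X → ℝ) x * (v : X → ℝ) x) =ᵐ[μ] 0) → T.Q u v = 0

def IsMarkov : Prop :=
  ∀ u ∈ T.dom, ∃ v ∈ T.dom,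
    ((v : X → ℝ) =ᵐ[μ] fun x => max 0 (min ((u : X → ℝ) x) 1)) ∧ T.Q v v ≤ T.Q u u

def formNormSq (u : Lp ℝ 2 μ) : ℝ := T.Q u u + ‖u‖ ^ 2

theorem add_right (u v w : Lp ℝ 2 μ) : T.Q u (v + w) = T.Q u v + T.Q u w := by
  rw [T.symm, T.add_left, T.symm v u, T.symm w u]

theorem formNormSq_nonneg (u : Lp ℝ 2 μ) : 0 ≤ T.formNormSq u :=
  add_nonneg (T.nonneg u) (sq_nonneg _)

theorem formNormSq_add_of_ae_mul_eq_zero (hT : T.IsLocal) {u v : Lp ℝ 2 μ} (hu : u ∈ T.dom)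
    (hv : v ∈ T.dom) (huv : (fun x => (u : X → ℝ) x * (v : X → ℝ) x) =ᵐ[μ] 0) :
    T.formNormSq (u + v) = T.formNormSq u + T.formNormSq v := by
  have hQ : T.Q u v = 0 := hT u hu v hv huv
  have hinner : ⟪u, v⟫ = 0 := by
    have h : (fun x => ⟪(u : X → ℝ) x, (v : X → ℝ) x⟫) =ᵐ[μ] 0 :=
      huv.mono fun x hx => by simpa [mul_comm] using hx
    rw [MeasureTheory.L2.inner_def, integral_congr_ae h, Pi.zero_def, integral_zero]
  unfold formNormSq
  rw [T.add_left, T.add_right, T.add_right, T.symm v u, hQ, norm_add_sq_real, hinner]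
  ring

theorem tendsto_of_formNormSq_sub_tendsto_zero {f : ℕ → Lp ℝ 2 μ} {u : Lp ℝ 2 μ}
    (h : Tendsto (fun n => T.formNormSq (f n - u)) atTop (𝓝 0)) : Tendsto f atTop (𝓝 u) := by
  rw [tendsto_iff_norm_sub_tendsto_zero]
  have hsq : Tendsto (fun n => ‖f n - u‖ ^ 2) atTop (𝓝 0) :=
    squeeze_zero (fun n => sq_nonneg _) (fun n => le_add_of_nonneg_left (T.nonneg _)) h
  simpa using hsq.sqrt

def funDom : Submodule ℝ (X → ℝ) where
  carrier := {f | ∃ u ∈ T.dom, (u : X → ℝ) =ᵐ[μ] f}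
  add_mem' := by
    rintro f g ⟨u, hu, huf⟩ ⟨v, hv, hvg⟩
    exact ⟨u + v, T.dom.add_mem hu hv, (Lp.coeFn_add u v).trans (huf.add hvg)⟩
  zero_mem' := ⟨0, T.dom.zero_mem, Lp.coeFn_zero ..⟩
  smul_mem' := by
    rintro c f ⟨u, hu, huf⟩
    exact ⟨c • u, T.dom.smul_mem c hu, (Lp.coeFn_smul c u).trans (huf.const_smul c)⟩

variable {T}

theorem abs_mem_funDom (hT : T.PosPres) {f : X → ℝ} (hf : f ∈ T.funDom) : |f| ∈ T.funDom := by
  obtain ⟨u, hu, huf⟩ := hf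
  exact ⟨|u|, (hT u hu).1, (Lp.coeFn_abs u).trans (huf.mono fun x hx => by simp [hx])⟩

theorem inf_mem_funDom (hT : T.PosPres) {f g : X → ℝ} (hf : f ∈ T.funDom)
    (hg : g ∈ T.funDom) : f ⊓ g ∈ T.funDom := by
  rw [inf_eq_half_smul_add_sub_abs_sub' ℝ]
  exact T.funDom.smul_mem _ (T.funDom.sub_mem (T.funDom.add_mem hf hg)
    (abs_mem_funDom hT (T.funDom.sub_mem hg hf)))

theorem sup_mem_funDom (hT : T.PosPres) {f g : X → ℝ} (hf : f ∈ T.funDom)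
    (hg : g ∈ T.funDom) : f ⊔ g ∈ T.funDom := by
  rw [sup_eq_half_smul_add_add_abs_sub' ℝ]
  exact T.funDom.smul_mem _ (T.funDom.add_mem (T.funDom.add_mem hf hg)
    (abs_mem_funDom hT (T.funDom.sub_mem hg hf)))

theorem truncate_mem_funDom (hT : T.IsMarkov) {f : X → ℝ} (hf : f ∈ T.funDom) {c : ℝ}
    (hc : 0 < c) : (fun x => max 0 (min (f x) c)) ∈ T.funDom := by
  obtain ⟨u, hu, huf⟩ := hf
  obtain ⟨v, hv, hvu, -⟩ := hT (c⁻¹ • u) (T.dom.smul_mem _ hu)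
  refine ⟨c • v, T.dom.smul_mem c hv, ?_⟩
  filter_upwards [Lp.coeFn_smul c v, hvu, Lp.coeFn_smul c⁻¹ u, huf] with x hcv hv hcu hu
  simp only [hcv, Pi.smul_apply, hv, hcu, hu, smul_eq_mul, mul_max_of_nonneg _ _ hc.le,
    mul_min_of_nonneg _ _ hc.le, mul_inv_cancel_left₀ hc.ne', mul_zero, mul_one]

theorem indicator_mem_funDom (hT : T.PosPres) {U : Set X} {f χ : X → ℝ} (hf : f ∈ T.funDom)
    (hχ : χ ∈ T.funDom) (hfχ : ∀ x ∈ U, |f x| ≤ χ x) (hχU : ∀ x ∉ U, χ x = 0) :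
    U.indicator f ∈ T.funDom := by
  have hclip : U.indicator f = f ⊓ χ ⊔ -χ := by
    funext x
    by_cases hx : x ∈ U
    · obtain ⟨hlow, hhigh⟩ := abs_le.1 (hfχ x hx)
      simp [hx, hhigh, hlow]
    · simp [hx, hχU x hx]
  rw [hclip]
  exact sup_mem_funDom hT (inf_mem_funDom hT hf hχ) (T.funDom.neg_mem hχ)

variable [TopologicalSpace X]

variable (T) in
def DomDenseInCc : Prop :=
  ∀ φ : X → ℝ, Continuous φ → HasCompactSupport φ → ∀ ε > 0, ∃ ψ ∈ T.funDom, ∀ x, |φ x - ψ x| < ε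

theorem exists_cutoff_mem_funDom [RegularSpace X] [LocallyCompactSpace X] (hT : T.IsMarkov)
    (hreg : T.DomDenseInCc) {K U : Set X} (hK : IsCompact K) (hU : IsOpen U) (hKU : K ⊆ U) :
    ∃ χ ∈ T.funDom, (∀ x ∈ K, χ x = 1) ∧ (∀ x ∉ U, χ x = 0) ∧ ∀ x, 0 ≤ χ x := by
  obtain ⟨f, hf1, hf0, hfcs, -⟩ := exists_continuous_one_zero_of_isCompact hK
    hU.isClosed_compl (Set.disjoint_compl_right_iff_subset.2 hKU)
  obtain ⟨ψ, hψ, hψf⟩ := hreg f f.continuous hfcs (1 / 4) (by norm_num)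
  -- `ψ > 3/4` on `K` and `ψ < 1/4` off `U`; the ramp is `0` below `1/4` and `1` above `3/4`.
  let ramp : ℝ → ℝ := fun t => 2 * (max 0 (min t (3 / 4)) - max 0 (min t (1 / 4)))
  refine ⟨fun x => ramp (ψ x), ?_, fun x hx => ?_, fun x hx => ?_, fun x => ?_⟩
  · exact T.funDom.smul_mem 2 (T.funDom.sub_mem (truncate_mem_funDom hT hψ (by norm_num))
      (truncate_mem_funDom hT hψ (by norm_num)))
  · have := abs_lt.1 (hψf x)
    rw [hf1 hx, Pi.one_apply] at this
    simp only [ramp, max_def, min_def]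
    split_ifs <;> linarith
  · have := abs_lt.1 (hψf x)
    rw [hf0 hx, Pi.zero_apply] at this
    simp only [ramp, max_def, min_def]
    split_ifs <;> linarith
  · simp only [ramp, max_def, min_def]
    split_ifs <;> linarith

theorem indicator_mem_funDom_of_isOpen_diff [RegularSpace X] [LocallyCompactSpace X]
    (hposp : T.PosPres) (hmarkov : T.IsMarkov) (hreg : T.DomDenseInCc)
    {A B : Set X} (hB : IsOpen B) (hAB : IsOpen (A \ B)) {φ : X → ℝ} (hφ : Continuous φ)
    (hφcs : HasCompactSupport φ) (hφA : tsupport φ ⊆ A) (hφT : φ ∈ T.funDom) :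
    B.indicator φ ∈ T.funDom := by
  obtain ⟨χ, hχ, hχK, hχB, hχ0⟩ := exists_cutoff_mem_funDom hmarkov hreg
    (hφcs.isCompact_inter_tsupport hAB hφA) hB Set.inter_subset_left
  obtain ⟨M, hM⟩ := hφ.bounded_above_of_compact_support hφcs
  refine indicator_mem_funDom hposp hφT (T.funDom.smul_mem M hχ) (fun x hx => ?_)
    (fun x hx => by simp [hχB x hx])
  by_cases hxφ : x ∈ tsupport φ
  · simpa [hχK x ⟨hx, hxφ⟩] using hM x
  · simpa [image_eq_zero_of_notMem_tsupport hxφ] using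
      mul_nonneg ((norm_nonneg _).trans (hM x)) (hχ0 x)

end WideForm

theorem indMul_eq_self_iff {μ : Measure X} {B : Set X} (hB : MeasurableSet B)
    (u : Lp ℝ 2 μ) : indMul B u = u ↔ (u : X → ℝ) =ᵐ[μ] B.indicator u := by
  rw [indMul, dif_pos hB]
  constructor
  · intro h
    simpa [h] using ((Lp.memLp u).indicator hB).coeFn_toLp
  · exact fun h => Lp.ext ((MemLp.coeFn_toLp _).trans h.symm)

theorem ae_eq_indicator_of_tendsto {μ : Measure X} {B : Set X} {g : ℕ → Lp ℝ 2 μ}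
    {u : Lp ℝ 2 μ} (hg : ∀ m, ∀ᵐ x ∂μ, x ∉ B → (g m : X → ℝ) x = 0)
    (hgu : Tendsto g atTop (𝓝 u)) : (u : X → ℝ) =ᵐ[μ] B.indicator u := by
  obtain ⟨ns, -, hns⟩ := (tendstoInMeasure_of_tendsto_Lp hgu).exists_seq_tendsto_ae
  filter_upwards [hns, ae_all_iff.2 hg] with x hx hgx
  by_cases hxB : x ∈ B
  · rw [Set.indicator_of_mem hxB]
  · rw [Set.indicator_of_notMem hxB]
    exact tendsto_nhds_unique hx (by simp only [hgx _ hxB, tendsto_const_nhds])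

section PartDom

variable {Y : Type*} [MeasurableSpace Y] [TopologicalSpace Y] {μ : Measure Y} {T : WideForm μ}
  {A B : Set Y} {u : Lp ℝ 2 μ}

theorem partDom_mono (hAB : A ⊆ B) : PartDom T A ⊆ PartDom T B := by
  rintro u ⟨hu, g, hg, hgu⟩
  refine ⟨hu, g, fun m => ?_, hgu⟩
  obtain ⟨hgm, φ, hφ, hφcs, hφA, hgφ⟩ := hg m
  exact ⟨hgm, φ, hφ, hφcs, hφA.trans hAB, hgφ⟩

theorem ae_eq_indicator_of_mem_partDom (hu : u ∈ PartDom T B) :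
    (u : Y → ℝ) =ᵐ[μ] B.indicator u := by
  obtain ⟨-, g, hg, hgu⟩ := hu
  refine ae_eq_indicator_of_tendsto (fun m => ?_) (T.tendsto_of_formNormSq_sub_tendsto_zero hgu)
  obtain ⟨-, φ, -, -, hφB, hgφ⟩ := hg m
  filter_upwards [hgφ] with x hx hxB
  rw [hx]
  exact image_eq_zero_of_notMem_tsupport fun h => hxB (hφB h)

theorem mem_partDom_of_isOpen_diff [RegularSpace Y] [LocallyCompactSpace Y]
    (hposp : T.PosPres) (hmarkov : T.IsMarkov) (hreg : T.DomDenseInCc)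
    (hlocal : T.IsLocal) (hB : IsOpen B) (hAB : IsOpen (A \ B)) (hu : u ∈ PartDom T A)
    (huB : (u : Y → ℝ) =ᵐ[μ] B.indicator u) : u ∈ PartDom T B := by
  obtain ⟨huT, g, hg, hgu⟩ := hu
  choose hgT φ hφ hφcs hφA hgφ using hg
  choose b hbT hbφ using fun m => WideForm.indicator_mem_funDom_of_isOpen_diff hposp hmarkov
    hreg hB hAB (hφ m) (hφcs m) (hφA m) ⟨g m, hgT m, hgφ m⟩
  have hsplit : ∀ m, T.formNormSq (g m - u) =
      T.formNormSq (b m - u) + T.formNormSq (g m - b m) := fun m => by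
    rw [← T.formNormSq_add_of_ae_mul_eq_zero hlocal (T.dom.sub_mem (hbT m) huT)
      (T.dom.sub_mem (hgT m) (hbT m)), sub_add_sub_cancel']
    filter_upwards [Lp.coeFn_sub (b m) u, Lp.coeFn_sub (g m) (b m), hbφ m, hgφ m, huB]
      with x hbu hgb hbx hgx hux
    simp only [hbu, hgb, Pi.sub_apply, hbx, hgx, hux, Pi.zero_apply]
    by_cases hxB : x ∈ B <;> simp [hxB]
  refine ⟨huT, b, fun m => ⟨hbT m, B.indicator (φ m), (hφ m).indicator_of_isOpen_diff hB hAB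
    (hφA m), ?_, ?_, hbφ m⟩, ?_⟩
  · exact (hφcs m).indicator_of_isOpen_diff hAB (hφA m)
  · exact (tsupport_indicator_subset_inter hAB (hφA m)).trans Set.inter_subset_left
  · exact squeeze_zero (fun m => T.formNormSq_nonneg _)
      (fun m => (le_add_of_nonneg_right (T.formNormSq_nonneg _)).trans_eq (hsplit m).symm) hgu

end PartDom

theorem part_restriction_eq_part_general {Y : Type*} [MetricSpace Y] [MeasurableSpace Y]
    [BorelSpace Y] [LocallyCompactSpace Y]
    [LocallyConnectedSpace Y]
    (μ : Measure Y)
    (T : WideForm μ)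
    (hposp : T.PosPres)
    (hDirichlet : ∀ u ∈ T.dom, ∃ v ∈ T.dom,
      ((v : Y → ℝ) =ᵐ[μ] fun x => max 0 (min ((u : Y → ℝ) x) 1)) ∧ T.Q v v ≤ T.Q u u)
    (hreg2 : ∀ φ : Y → ℝ, Continuous φ → HasCompactSupport φ → ∀ ε > 0,
      ∃ ψ : Y → ℝ, Continuous ψ ∧ HasCompactSupport ψ ∧
        (∃ u ∈ T.dom, (u : Y → ℝ) =ᵐ[μ] ψ) ∧ ∀ x, |φ x - ψ x| < ε)
    (hlocal : ∀ u ∈ T.dom, ∀ v ∈ T.dom,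
      ((fun x => (u : Y → ℝ) x * (v : Y → ℝ) x) =ᵐ[μ] 0) → T.Q u v = 0)
    (A : Set Y) (hA : IsOpen A)
    (B : Set Y) (hB : ∃ x ∈ A, B = connectedComponentIn A x) :
    ∀ u : Lp ℝ 2 μ, (u ∈ PartDom T A ∧ indMul B u = u) ↔ u ∈ PartDom T B := by
  obtain ⟨x₀, -, rfl⟩ := hB
  have hBopen : IsOpen (connectedComponentIn A x₀) := hA.connectedComponentIn
  have hreg : T.DomDenseInCc := fun φ hφ hφcs ε hε =>
    (hreg2 φ hφ hφcs ε hε).imp fun _ hψ => ⟨hψ.2.2.1, hψ.2.2.2⟩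
  intro u
  rw [indMul_eq_self_iff hBopen.measurableSet]
  exact ⟨fun ⟨hu, huB⟩ => mem_partDom_of_isOpen_diff hposp hDirichlet hreg hlocal hBopen
      (isOpen_diff_connectedComponentIn hA x₀) hu huB,
    fun hu => ⟨partDom_mono (connectedComponentIn_subset A x₀) hu,
      ae_eq_indicator_of_mem_partDom hu⟩⟩

/-- for a local regular Dirichlet form on a locally compact, separable,
locally connected metric space with a Radon measure of full support, the restriction of
the part `Q^A` to a topological connected component `B` of the open set `A` equals the
part `Q^B`: their domains coincide. -/
theorem part_restriction_eq_part {Y : Type*} [MetricSpace Y] [MeasurableSpace Y]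
    [BorelSpace Y] [LocallyCompactSpace Y] [TopologicalSpace.SeparableSpace Y]
    [LocallyConnectedSpace Y]
    (μ : Measure Y) [Measure.Regular μ] [Measure.IsOpenPosMeasure μ]
    (T : WideForm μ)
    (hdensedom : Dense (T.dom : Set (Lp ℝ 2 μ)))
    (hposp : T.PosPres)
    (hDirichlet : ∀ u ∈ T.dom, ∃ v ∈ T.dom,
      ((v : Y → ℝ) =ᵐ[μ] fun x => max 0 (min ((u : Y → ℝ) x) 1)) ∧ T.Q v v ≤ T.Q u u)
    (hreg1 : ∀ u ∈ T.dom, u ∈ PartDom T Set.univ)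
    (hreg2 : ∀ φ : Y → ℝ, Continuous φ → HasCompactSupport φ → ∀ ε > 0,
      ∃ ψ : Y → ℝ, Continuous ψ ∧ HasCompactSupport ψ ∧
        (∃ u ∈ T.dom, (u : Y → ℝ) =ᵐ[μ] ψ) ∧ ∀ x, |φ x - ψ x| < ε)
    (hlocal : ∀ u ∈ T.dom, ∀ v ∈ T.dom,
      ((fun x => (u : Y → ℝ) x * (v : Y → ℝ) x) =ᵐ[μ] 0) → T.Q u v = 0)
    (A : Set Y) (hA : IsOpen A)
    (B : Set Y) (hB : ∃ x ∈ A, B = connectedComponentIn A x) :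
    ∀ u : Lp ℝ 2 μ, (u ∈ PartDom T A ∧ indMul B u = u) ↔ u ∈ PartDom T B :=
  part_restriction_eq_part_general μ T hposp hDirichlet hreg2 hlocal A hA B hB
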